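/- arXiv:2512.24477 — 6 statements merged into one kernel-verified Lean document; each statement's English description precedes it below -/
import Mathlib

section
/- Let R = [[-1/2, √3/2], [-√3/2, -1/2]] and J = [[0, 1], [-1, 0]]. Suppose A : ℝ² → M₂(ℂ) has differentiable entries and satisfies A(R⁻¹x) = R⁻¹ A(x) R for all x ∈ ℝ². Define C : ℝ² → M₂(ℂ) entrywise by C_{kl}(x) := D(A_{kl})(x)[Jx], the directional derivative of the entry A_{kl} at x in the direction Jx. Then C(R⁻¹x) = R⁻¹ C(x) R for all x ∈ ℝ². -/
open Complex

/-- The clockwise rotation by `2π/3`: `R = [[-1/2, √3/2],[-√3/2, -1/2]]`. -/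
noncomputable def Rm : Matrix (Fin 2) (Fin 2) ℝ :=
  !![-(1/2), Real.sqrt 3 / 2; -(Real.sqrt 3) / 2, -(1/2)]

/-- The generator of infinitesimal rotations `J = [[0,1],[-1,0]]`. -/
def Jm : Matrix (Fin 2) (Fin 2) ℝ := !![0, 1; -1, 0]

/-- `R` regarded as a complex matrix. -/
noncomputable def Rc : Matrix (Fin 2) (Fin 2) ℂ := Rm.map Complex.ofReal

/-- The leading-order perturbation tensor `C(x)` with entries
`C_{kl}(x) = D(A_{kl})(x)[Jx]`. -/
noncomputable def Cpert (A : (Fin 2 → ℝ) → Matrix (Fin 2) (Fin 2) ℂ)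
    (x : Fin 2 → ℝ) : Matrix (Fin 2) (Fin 2) ℂ :=
  Matrix.of fun k l => fderiv ℝ (fun y => A y k l) x (Jm.mulVec x)

/-! `C` is the derivative of `A` along the rotation field `x ↦ Jx`. Since `R` commutes with `J`,
the substitution `x ↦ R⁻¹x` preserves this field, so differentiating the symmetry
`A ∘ R⁻¹ = R⁻¹ A R` along `Jx` yields the same relation for `C`. -/

section MatrixFDeriv

variable {𝕜 E E' F 𝔸 : Type*} [NontriviallyNormedField 𝕜]
  [NormedAddCommGroup E] [NormedSpace 𝕜 E] [NormedAddCommGroup E'] [NormedSpace 𝕜 E']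
  [NormedAddCommGroup F] [NormedSpace 𝕜 F] [NormedRing 𝔸] [NormedAlgebra 𝕜 𝔸] {m n p q : Type*}

variable (𝕜) in
noncomputable def Matrix.dirDeriv (A : E → Matrix m n F) (x v : E) : Matrix m n F :=
  Matrix.of fun k l => fderiv 𝕜 (fun y => A y k l) x v

theorem Matrix.dirDeriv_comp_continuousLinearMap (A : E' → Matrix m n F) (P : E →L[𝕜] E') (x v : E)
    (hA : ∀ k l, DifferentiableAt 𝕜 (fun y => A y k l) (P x)) :
    Matrix.dirDeriv 𝕜 (fun y => A (P y)) x v = Matrix.dirDeriv 𝕜 A (P x) (P v) := by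
  ext k l
  simp only [Matrix.dirDeriv, Matrix.of_apply]
  rw [fderiv_fun_comp x (hA k l) P.differentiableAt, P.fderiv]
  rfl

theorem Matrix.dirDeriv_mul_mul [Fintype n] [Fintype p] (M : Matrix m n 𝔸)
    (A : E → Matrix n p 𝔸) (N : Matrix p q 𝔸) (x v : E)
    (hA : ∀ i j, DifferentiableAt 𝕜 (fun y => A y i j) x) :
    Matrix.dirDeriv 𝕜 (fun y => M * A y * N) x v = M * Matrix.dirDeriv 𝕜 A x v * N := by
  ext k l
  have hMA : ∀ j, DifferentiableAt 𝕜 (fun y => ∑ i, M k i * A y i j) x := fun j =>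
    DifferentiableAt.fun_sum fun i _ => (hA i j).const_mul _
  simp only [Matrix.dirDeriv, Matrix.of_apply, Matrix.mul_apply]
  rw [fderiv_fun_sum fun j _ => (hMA j).mul_const _]
  simp only [_root_.sum_apply]
  refine Finset.sum_congr rfl fun j _ => ?_
  rw [fderiv_mul_const' (hMA j), fderiv_fun_sum fun i _ => (hA i j).const_mul _]
  simp [fderiv_const_mul (hA _ j), Finset.sum_mul]

end MatrixFDeriv

theorem Rm_pow_three : Rm ^ 3 = 1 := by
  have h2 : Real.sqrt 3 ^ 2 = 3 := Real.sq_sqrt (by norm_num)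
  have h3 : Real.sqrt 3 ^ 3 = 3 * Real.sqrt 3 := by rw [pow_succ, h2]
  ext i j
  fin_cases i <;> fin_cases j <;>
    simp [Rm, pow_succ, Matrix.mul_apply, Fin.sum_univ_two] <;> ring_nf <;> simp only [h2, h3] <;>
    ring

theorem Rm_inv_eq_sq : Rm⁻¹ = Rm ^ 2 :=
  Matrix.inv_eq_left_inv (by rw [← pow_succ, Rm_pow_three])

theorem commute_Rm_Jm : Commute Rm Jm := by
  ext i j
  fin_cases i <;> fin_cases j <;> simp [Rm, Jm, Matrix.mul_apply, Fin.sum_univ_two] <;> ring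

theorem commute_Rm_inv_Jm : Commute Rm⁻¹ Jm :=
  Rm_inv_eq_sq ▸ commute_Rm_Jm.pow_left 2

theorem Cpert_eq_dirDeriv (A : (Fin 2 → ℝ) → Matrix (Fin 2) (Fin 2) ℂ) (x : Fin 2 → ℝ) :
    Cpert A x = Matrix.dirDeriv ℝ A x (Jm.mulVec x) :=
  rfl

/-- `2π/3`-rotational invariance of the perturbation tensor `C`. -/
theorem statement2 (A : (Fin 2 → ℝ) → Matrix (Fin 2) (Fin 2) ℂ)
    (hdiff : ∀ k l, Differentiable ℝ fun x => A x k l)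
    (hsym : ∀ x, A (Rm⁻¹.mulVec x) = Rc⁻¹ * A x * Rc) :
    ∀ x, Cpert A (Rm⁻¹.mulVec x) = Rc⁻¹ * Cpert A x * Rc := by
  intro x
  set P : (Fin 2 → ℝ) →L[ℝ] (Fin 2 → ℝ) := (Matrix.toLin' Rm⁻¹).toContinuousLinearMap
  have hJ : Jm.mulVec (P x) = P (Jm.mulVec x) := by
    simp only [P, LinearMap.coe_toContinuousLinearMap', Matrix.toLin'_apply, Matrix.mulVec_mulVec,
      commute_Rm_inv_Jm.eq]
  calc Cpert A (P x) = Matrix.dirDeriv ℝ A (P x) (P (Jm.mulVec x)) := by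
        rw [Cpert_eq_dirDeriv, hJ]
    _ = Matrix.dirDeriv ℝ (fun y => A (P y)) x (Jm.mulVec x) :=
      (Matrix.dirDeriv_comp_continuousLinearMap A P x _ fun k l => hdiff k l _).symm
    _ = Matrix.dirDeriv ℝ (fun y => Rc⁻¹ * A y * Rc) x (Jm.mulVec x) := by
      simp only [P, LinearMap.coe_toContinuousLinearMap', Matrix.toLin'_apply, hsym]
    _ = Rc⁻¹ * Matrix.dirDeriv ℝ A x (Jm.mulVec x) * Rc :=
      Matrix.dirDeriv_mul_mul _ A _ x _ fun i j => hdiff i j x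
    _ = Rc⁻¹ * Cpert A x * Rc := by rw [Cpert_eq_dirDeriv]
end

section
/- Let F = [[-1, 0], [0, 1]], R = [[-1/2, √3/2], [-√3/2, -1/2]], and σ = [[0, -i], [i, 0]] ∈ M₂(ℂ). Let D ⊆ ℝ² be a set satisfying F⁻¹(D) = D and R⁻¹(D) = D, and define B : ℝ² → M₂(ℂ) by B(x) := χ_D(x)·σ, where χ_D is the characteristic function of D. Then for all x ∈ ℝ²: (i) B(Fx) = -F B(x) F; (ii) B(R⁻¹x) = R⁻¹ B(x) R; (iii) conj(B(x)) = -B(x); (iv) B(x) is Hermitian, i.e. conj(B(x))ᵀ = B(x). -/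
open Complex

/-- The reflection matrix `F = [[-1,0],[0,1]]`. -/
def Fm : Matrix (Fin 2) (Fin 2) ℝ := !![-1, 0; 0, 1]

/-- `F` regarded as a complex matrix. -/
def Fc : Matrix (Fin 2) (Fin 2) ℂ := Fm.map Complex.ofReal

/-- The matrix `σ = [[0, -i],[i, 0]]`. -/
def σm : Matrix (Fin 2) (Fin 2) ℂ := !![0, -Complex.I; Complex.I, 0]

lemma sqrt3_sq : Real.sqrt 3 * Real.sqrt 3 = 3 :=
  Real.mul_self_sqrt (by norm_num)

lemma detRm : Rm.det = 1 := by
  simp [Rm, Matrix.det_fin_two_of]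
  nlinarith [sqrt3_sq]

lemma detRm_ne : Rm.det ≠ 0 := by rw [detRm]; norm_num

lemma detRc : Rc.det = 1 := by
  have : Rc.det = ((Rm.det : ℝ) : ℂ) := by
    rw [Matrix.det_fin_two, Matrix.det_fin_two]
    simp [Rc, Matrix.map_apply]
  rw [this, detRm]; simp

lemma detRc_ne : Rc.det ≠ 0 := by rw [detRc]; norm_num

lemma FσF : Fc * σm * Fc = -σm := by
  ext i j
  fin_cases i <;> fin_cases j <;>
    simp [Fc, Fm, σm, Matrix.mul_apply, Fin.sum_univ_succ, Matrix.map_apply]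

lemma Rcomm : Rc * σm = σm * Rc := by
  ext i j
  fin_cases i <;> fin_cases j <;>
    simp [Rc, Rm, σm, Matrix.mul_apply, Fin.sum_univ_succ, Matrix.map_apply] <;>
    ring

lemma RσR : Rc⁻¹ * σm * Rc = σm := by
  rw [Matrix.mul_assoc, ← Rcomm, ← Matrix.mul_assoc,
    Matrix.nonsing_inv_mul _ (isUnit_iff_ne_zero.mpr detRc_ne), Matrix.one_mul]

lemma σconj : σm.map (starRingEnd ℂ) = -σm := by
  ext i j
  fin_cases i <;> fin_cases j <;> simp [σm, Matrix.map_apply]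

lemma σherm : σm.conjTranspose = σm := by
  ext i j
  fin_cases i <;> fin_cases j <;> simp [σm, Matrix.conjTranspose_apply]

/-- symmetries of the magneto-optical perturbation tensor
`B(x) = χ_D(x)·σ`. -/
theorem statement3 (D : Set (Fin 2 → ℝ))
    (hDF : Fm.mulVec ⁻¹' D = D) (hDR : Rm.mulVec ⁻¹' D = D)
    (B : (Fin 2 → ℝ) → Matrix (Fin 2) (Fin 2) ℂ)
    (hB : ∀ x, B x = D.indicator (fun _ => σm) x) :
    (∀ x, B (Fm.mulVec x) = -(Fc * B x * Fc))
    ∧ (∀ x, B (Rm⁻¹.mulVec x) = Rc⁻¹ * B x * Rc)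
    ∧ (∀ x, (B x).map (starRingEnd ℂ) = -B x)
    ∧ (∀ x, (B x).conjTranspose = B x) := by
  have hDF' : ∀ x, Fm.mulVec x ∈ D ↔ x ∈ D := fun x =>
    Set.ext_iff.mp hDF x
  have hDR' : ∀ x, Rm.mulVec x ∈ D ↔ x ∈ D := fun x =>
    Set.ext_iff.mp hDR x
  have hRinv : ∀ x, Rm⁻¹.mulVec x ∈ D ↔ x ∈ D := by
    intro x
    have h1 := hDR' (Rm⁻¹.mulVec x)
    rw [Matrix.mulVec_mulVec, Matrix.mul_nonsing_inv _ (isUnit_iff_ne_zero.mpr detRm_ne),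
      Matrix.one_mulVec] at h1
    exact h1.symm
  refine ⟨fun x => ?_, fun x => ?_, fun x => ?_, fun x => ?_⟩
  · rw [hB, hB]
    by_cases hx : x ∈ D
    · rw [Set.indicator_of_mem ((hDF' x).mpr hx), Set.indicator_of_mem hx,
        FσF, neg_neg]
    · rw [Set.indicator_of_notMem (fun h => hx ((hDF' x).mp h)),
        Set.indicator_of_notMem hx]
      simp
  · rw [hB, hB]
    by_cases hx : x ∈ D
    · rw [Set.indicator_of_mem ((hRinv x).mpr hx), Set.indicator_of_mem hx, RσR]
    · rw [Set.indicator_of_notMem (fun h => hx ((hRinv x).mp h)),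
        Set.indicator_of_notMem hx]
      simp
  · rw [hB]
    by_cases hx : x ∈ D
    · rw [Set.indicator_of_mem hx, σconj]
    · rw [Set.indicator_of_notMem hx]; simp
  · rw [hB]
    by_cases hx : x ∈ D
    · rw [Set.indicator_of_mem hx, σherm]
    · rw [Set.indicator_of_notMem hx]; simp
end

section
/- Let F = [[-1, 0], [0, 1]]. Let B : ℝ² → M₂(ℂ) be measurable with B(Fx) = -F B(x) F for all x ∈ ℝ², and let E ⊆ ℝ² be a measurable set with F⁻¹(E) = E. Let w₁ : ℝ² → ℂ be differentiable and set w₂(x) := w₁(Fx). Assume that x ↦ conj(∇w₁(x))ᵀ B(x) ∇w₁(x) is integrable on E. Then ∫_E conj(∇w₂(x))ᵀ B(x) ∇w₂(x) dx = -∫_E conj(∇w₁(x))ᵀ B(x) ∇w₁(x) dx. -/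
open Complex ComplexConjugate MeasureTheory

/-- The gradient of a function `w : ℝ² → ℂ`: the vector of its partial derivatives at `x`. -/
noncomputable def grad (w : (Fin 2 → ℝ) → ℂ) (x : Fin 2 → ℝ) : Fin 2 → ℂ :=
  fun i => fderiv ℝ w x (Pi.single i 1)

lemma Fm_invol (x : Fin 2 → ℝ) : Fm.mulVec (Fm.mulVec x) = x := by
  funext i
  fin_cases i <;> simp [Fm, Matrix.mulVec, dotProduct, Fin.sum_univ_two]

lemma Fm_mp : MeasurePreserving Fm.mulVec (volume : Measure (Fin 2 → ℝ)) volume := by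
  have hdet : Fm.det = -1 := by simp [Fm, Matrix.det_fin_two]
  have h := Real.map_matrix_volume_pi_eq_smul_volume_pi (M := Fm) (by rw [hdet]; norm_num)
  refine ⟨?_, ?_⟩
  · exact (Matrix.toLin' Fm).continuous_of_finiteDimensional.measurable
  · have : (Matrix.toLin' Fm : (Fin 2 → ℝ) → (Fin 2 → ℝ)) = Fm.mulVec := rfl
    rw [← this, h, hdet]; norm_num

def Fme : MeasurableEquiv (Fin 2 → ℝ) (Fin 2 → ℝ) where
  toFun := Fm.mulVec
  invFun := Fm.mulVec
  left_inv := Fm_invol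
  right_inv := Fm_invol
  measurable_toFun := Fm_mp.measurable
  measurable_invFun := Fm_mp.measurable


/-- if `B(Fx) = -F B(x) F`, `F⁻¹(E) = E` and `w₂(x) := w₁(Fx)`, then
`∫_E conj(∇w₂)ᵀ B ∇w₂ = -∫_E conj(∇w₁)ᵀ B ∇w₁`. -/
theorem statement6 (B : (Fin 2 → ℝ) → Matrix (Fin 2) (Fin 2) ℂ)
    (hBmeas : ∀ k l, Measurable fun x => B x k l)
    (hBsym : ∀ x, B (Fm.mulVec x) = -(Fc * B x * Fc))
    (E : Set (Fin 2 → ℝ)) (hE : MeasurableSet E) (hEF : Fm.mulVec ⁻¹' E = E)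
    (w₁ : (Fin 2 → ℝ) → ℂ) (hw₁ : Differentiable ℝ w₁)
    (w₂ : (Fin 2 → ℝ) → ℂ) (hw₂ : ∀ x, w₂ x = w₁ (Fm.mulVec x))
    (hint : IntegrableOn
      (fun x => ∑ k : Fin 2, ∑ l : Fin 2, conj (grad w₁ x k) * B x k l * grad w₁ x l) E) :
    (∫ x in E, ∑ k : Fin 2, ∑ l : Fin 2, conj (grad w₂ x k) * B x k l * grad w₂ x l)
      = -∫ x in E, ∑ k : Fin 2, ∑ l : Fin 2, conj (grad w₁ x k) * B x k l * grad w₁ x l := by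
  classical
  set L : (Fin 2 → ℝ) →L[ℝ] (Fin 2 → ℝ) := (Matrix.mulVecLin Fm).toContinuousLinearMap with hL
  have hLapp : ∀ x, L x = Fm.mulVec x := fun x => rfl
  have hw₂' : w₂ = w₁ ∘ L := by funext x; simp [hw₂ x, hLapp]
  -- gradient of w₂
  have hgrad : ∀ x i, grad w₂ x i = fderiv ℝ w₁ (Fm.mulVec x) (Fm.mulVec (Pi.single i 1)) := by
    intro x i
    have hd : fderiv ℝ w₂ x = (fderiv ℝ w₁ (Fm.mulVec x)).comp L := by
      rw [hw₂']
      have := fderiv_comp (𝕜 := ℝ) x (hw₁ (L x)) (L.differentiableAt)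
      rw [this, L.fderiv, hLapp]
    simp [grad, hd, hLapp]
  have hL0 : Fm.mulVec (Pi.single (0 : Fin 2) 1) = -(Pi.single (0 : Fin 2) (1:ℝ)) := by
    funext i; fin_cases i <;>
      simp [Fm, Matrix.mulVec, dotProduct, Fin.sum_univ_two, Pi.single_apply]
  have hL1 : Fm.mulVec (Pi.single (1 : Fin 2) 1) = Pi.single (1 : Fin 2) (1:ℝ) := by
    funext i; fin_cases i <;>
      simp [Fm, Matrix.mulVec, dotProduct, Fin.sum_univ_two, Pi.single_apply]
  have hg0 : ∀ x, grad w₂ x 0 = -grad w₁ (Fm.mulVec x) 0 := by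
    intro x; rw [hgrad, hL0, map_neg]; rfl
  have hg1 : ∀ x, grad w₂ x 1 = grad w₁ (Fm.mulVec x) 1 := by
    intro x; rw [hgrad, hL1]; rfl
  -- pointwise identity
  have key : ∀ x, (∑ k : Fin 2, ∑ l : Fin 2, conj (grad w₂ x k) * B x k l * grad w₂ x l)
      = -(∑ k : Fin 2, ∑ l : Fin 2,
          conj (grad w₁ (Fm.mulVec x) k) * B (Fm.mulVec x) k l * grad w₁ (Fm.mulVec x) l) := by
    intro x
    have hB := hBsym x
    have hBe : ∀ k l, B (Fm.mulVec x) k l = -((Fc * B x * Fc) k l) := by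
      intro k l; rw [hB]; rfl
    have hFc : ∀ k l, (Fc * B x * Fc) k l = Fc k k * B x k l * Fc l l := by
      intro k l
      fin_cases k <;> fin_cases l <;>
        simp [Fc, Fm, Matrix.mul_apply, Fin.sum_univ_two]
    simp only [Fin.sum_univ_two, hg0, hg1, hBe, hFc]
    simp [Fc, Fm]
    ring
  simp only [key]
  rw [integral_neg, neg_inj]
  have hemb : MeasurableEmbedding Fm.mulVec := Fme.measurableEmbedding
  have := Fm_mp.setIntegral_preimage_emb hemb
    (fun y => ∑ k : Fin 2, ∑ l : Fin 2, conj (grad w₁ y k) * B y k l * grad w₁ y l) E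
  rw [hEF] at this
  exact this
end

section
/- Let R = [[-1/2, √3/2], [-√3/2, -1/2]] and τ = exp(2πi/3). Let A : ℝ² → M₂(ℂ) be measurable with A(R⁻¹x) = R⁻¹ A(x) R for all x ∈ ℝ², and let E ⊆ ℝ² be a measurable set with R⁻¹(E) = E. Let w₁, w₂ : ℝ² → ℂ be differentiable with w₁(R⁻¹x) = τ·w₁(x) and w₂(R⁻¹x) = conj(τ)·w₂(x) for all x ∈ ℝ². For β ∈ ℝ², define G(β) := ∫_E [ -i·conj(w₁(x))·βᵀ(A(x)∇w₂(x)) + i·w₂(x)·βᵀ(A(x)·conj(∇w₁(x))) ] dx, and assume the integrand is integrable on E both for β and for R⁻¹β. Then G(R⁻¹β) = τ·G(β). -/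
open Complex ComplexConjugate MeasureTheory

/-- `τ = exp(2πi/3)`. -/
noncomputable def τ : ℂ := Complex.exp (2 * Real.pi * Complex.I / 3)

/-- The integrand of `G(β)`:
`-i·conj(w₁(x))·βᵀ(A(x)∇w₂(x)) + i·w₂(x)·βᵀ(A(x)·conj(∇w₁(x)))`. -/
noncomputable def Gint (A : (Fin 2 → ℝ) → Matrix (Fin 2) (Fin 2) ℂ)
    (w₁ w₂ : (Fin 2 → ℝ) → ℂ) (β : Fin 2 → ℝ) (x : Fin 2 → ℝ) : ℂ :=
  -Complex.I * conj (w₁ x) * (∑ i : Fin 2, (β i : ℂ) * (A x).mulVec (grad w₂ x) i)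
    + Complex.I * w₂ x * (∑ i : Fin 2, (β i : ℂ) * (A x).mulVec (fun j => conj (grad w₁ x j)) i)

/-!
Substituting `x ↦ R⁻¹x`, which preserves Lebesgue measure and `E`, turns `G(R⁻¹β)` into the
integral over `E` of the integrand at `(R⁻¹β, R⁻¹x)`. Differentiating `w(R⁻¹x) = c·w(x)` gives
`∇w(R⁻¹x) = c·R⁻¹∇w(x)`; as `R⁻¹` is orthogonal, all copies of `R⁻¹` in
`(R⁻¹β)ᵀ A(R⁻¹x) ∇w(R⁻¹x)` cancel against `A(R⁻¹x) = R⁻¹A(x)R`, so the integrand is multiplied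
pointwise by `conj τ · conj τ = τ`.
-/

open Matrix

namespace Matrix

variable {n : Type*} [Fintype n]

lemma ofReal_mulVec (Q : Matrix n n ℝ) (v : n → ℝ) :
    (fun i => ((Q *ᵥ v) i : ℂ)) = Q.map ofReal *ᵥ fun i => (v i : ℂ) :=
  funext (RingHom.map_mulVec ofRealHom Q v)

lemma conj_map_ofReal_mulVec (Q : Matrix n n ℝ) (v : n → ℂ) :
    (fun i => conj ((Q.map ofReal *ᵥ v) i)) = Q.map ofReal *ᵥ fun i => conj (v i) := by
  funext i
  simp [mulVec, dotProduct]

variable [DecidableEq n]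

lemma dotProduct_mulVec_conjugate {R : Type*} [CommRing R] {U : Matrix n n R}
    (hU : Uᵀ * U = 1) (M : Matrix n n R) (b v : n → R) :
    (U *ᵥ b) ⬝ᵥ ((U * M * Uᵀ) *ᵥ (U *ᵥ v)) = b ⬝ᵥ (M *ᵥ v) := by
  rw [← vecMul_transpose, ← dotProduct_mulVec, mulVec_mulVec, mulVec_mulVec,
    show Uᵀ * (U * M * Uᵀ) * U = Uᵀ * U * M * (Uᵀ * U) by simp only [Matrix.mul_assoc], hU,
    Matrix.one_mul, Matrix.mul_one]

lemma preimage_mulVec_eq_of_mul_eq_one {R : Type*} [Semiring R] {P Q : Matrix n n R}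
    (hPQ : P * Q = 1) {E : Set (n → R)} (hE : (P *ᵥ ·) ⁻¹' E = E) : (Q *ᵥ ·) ⁻¹' E = E := by
  conv_lhs => rw [← hE, ← Set.preimage_comp]
  simp [Function.comp_def, mulVec_mulVec, hPQ]

variable {Q : Matrix n n ℝ}

lemma map_ofReal_mem_orthogonalGroup (hQ : Q ∈ orthogonalGroup n ℝ) :
    Q.map ofReal ∈ orthogonalGroup n ℂ := by
  rw [mem_orthogonalGroup_iff, ← transpose_map]
  have h := congrArg (Matrix.map · ofRealHom) ((mem_orthogonalGroup_iff n ℝ).mp hQ)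
  rwa [Matrix.map_mul, Matrix.map_one _ ofRealHom.map_zero ofRealHom.map_one] at h

lemma abs_det_eq_one_of_mem_orthogonalGroup (hQ : Q ∈ orthogonalGroup n ℝ) : |Q.det| = 1 := by
  have h := congrArg det ((mem_orthogonalGroup_iff' n ℝ).mp hQ)
  rw [det_mul, det_transpose, det_one] at h
  exact (abs_eq zero_le_one).mpr (mul_self_eq_one_iff.mp h)

lemma measurePreserving_mulVec_of_mem_orthogonalGroup (hQ : Q ∈ orthogonalGroup n ℝ) :
    MeasurePreserving (Q *ᵥ ·) (volume : Measure (n → ℝ)) volume := by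
  refine ⟨(toLin' Q).continuous_of_finiteDimensional.measurable, ?_⟩
  have hdet := abs_det_eq_one_of_mem_orthogonalGroup hQ
  rw [show (Q *ᵥ ·) = toLin' Q from rfl, Real.map_matrix_volume_pi_eq_smul_volume_pi
    (by rintro h; simp [h] at hdet)]
  simp [abs_inv, hdet]

lemma measurableEmbedding_mulVec_of_mem_orthogonalGroup (hQ : Q ∈ orthogonalGroup n ℝ) :
    MeasurableEmbedding (Q *ᵥ ·) :=
  (UnitaryGroup.toLinearEquiv ⟨Q, hQ⟩).toContinuousLinearEquiv.toHomeomorph.measurableEmbedding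

lemma setIntegral_comp_mulVec_of_preimage_eq {F : Type*} [NormedAddCommGroup F] [NormedSpace ℝ F]
    (hQ : Q ∈ orthogonalGroup n ℝ) {E : Set (n → ℝ)} (hE : (Q *ᵥ ·) ⁻¹' E = E)
    (f : (n → ℝ) → F) : ∫ x in E, f (Q *ᵥ x) = ∫ x in E, f x := by
  have h := (measurePreserving_mulVec_of_mem_orthogonalGroup hQ).setIntegral_preimage_emb
    (measurableEmbedding_mulVec_of_mem_orthogonalGroup hQ) f E
  rwa [hE] at h

end Matrix

lemma fderiv_apply_eq_sum_grad (w : (Fin 2 → ℝ) → ℂ) (x v : Fin 2 → ℝ) :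
    fderiv ℝ w x v = ∑ i, (v i : ℂ) * grad w x i := by
  conv_lhs => rw [pi_eq_sum_univ' v]
  simp only [map_sum, map_smul, Complex.real_smul, grad]

lemma grad_comp_mulVec {w : (Fin 2 → ℝ) → ℂ} (hw : Differentiable ℝ w)
    (Q : Matrix (Fin 2) (Fin 2) ℝ) (x : Fin 2 → ℝ) :
    grad (fun y => w (Q *ᵥ y)) x = (Q.map ofReal)ᵀ *ᵥ grad w (Q *ᵥ x) := by
  let L : (Fin 2 → ℝ) →L[ℝ] (Fin 2 → ℝ) := (toLin' Q).toContinuousLinearMap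
  have hchain : fderiv ℝ (fun y => w (L y)) x = (fderiv ℝ w (L x)).comp L :=
    (hw (L x)).hasFDerivAt.comp x L.hasFDerivAt |>.fderiv
  funext i
  change fderiv ℝ (fun y => w (L y)) x _ = _
  rw [hchain, ContinuousLinearMap.comp_apply, fderiv_apply_eq_sum_grad,
    show L (Pi.single i 1) = Q.col i from mulVec_single_one Q i]
  rfl

lemma grad_mulVec_of_comp_eq_mul {w : (Fin 2 → ℝ) → ℂ} (hw : Differentiable ℝ w)
    {Q : Matrix (Fin 2) (Fin 2) ℝ} (hQ : Q ∈ orthogonalGroup (Fin 2) ℝ) {c : ℂ}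
    (hc : ∀ x, w (Q *ᵥ x) = c * w x) (x : Fin 2 → ℝ) :
    grad w (Q *ᵥ x) = c • (Q.map ofReal *ᵥ grad w x) := by
  have hgrad : (Q.map ofReal)ᵀ *ᵥ grad w (Q *ᵥ x) = c • grad w x := by
    rw [← grad_comp_mulVec hw, funext hc]
    funext i
    simp only [grad, fderiv_const_mul (hw x), _root_.smul_apply, smul_eq_mul, Pi.smul_apply]
  rw [← mulVec_smul, ← hgrad, mulVec_mulVec,
    (mem_orthogonalGroup_iff (Fin 2) ℂ).mp (map_ofReal_mem_orthogonalGroup hQ), one_mulVec]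

lemma Gint_eq_dotProduct (A : (Fin 2 → ℝ) → Matrix (Fin 2) (Fin 2) ℂ)
    (w₁ w₂ : (Fin 2 → ℝ) → ℂ) (β x : Fin 2 → ℝ) :
    Gint A w₁ w₂ β x =
      -I * conj (w₁ x) * ((fun i => (β i : ℂ)) ⬝ᵥ (A x *ᵥ grad w₂ x))
        + I * w₂ x * ((fun i => (β i : ℂ)) ⬝ᵥ (A x *ᵥ fun j => conj (grad w₁ x j))) :=
  rfl

lemma Gint_mulVec {A : (Fin 2 → ℝ) → Matrix (Fin 2) (Fin 2) ℂ} {Q : Matrix (Fin 2) (Fin 2) ℝ}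
    (hQ : Q ∈ orthogonalGroup (Fin 2) ℝ)
    (hA : ∀ x, A (Q *ᵥ x) = Q.map ofReal * A x * (Q.map ofReal)ᵀ)
    {w₁ w₂ : (Fin 2 → ℝ) → ℂ} (hw₁ : Differentiable ℝ w₁) (hw₂ : Differentiable ℝ w₂)
    {c₁ c₂ : ℂ} (hw₁Q : ∀ x, w₁ (Q *ᵥ x) = c₁ * w₁ x) (hw₂Q : ∀ x, w₂ (Q *ᵥ x) = c₂ * w₂ x)
    (β x : Fin 2 → ℝ) :
    Gint A w₁ w₂ (Q *ᵥ β) (Q *ᵥ x) = conj c₁ * c₂ * Gint A w₁ w₂ β x := by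
  have hQc := (mem_orthogonalGroup_iff' (Fin 2) ℂ).mp (map_ofReal_mem_orthogonalGroup hQ)
  have hgrad₁ : (fun j => conj (grad w₁ (Q *ᵥ x) j))
      = conj c₁ • (Q.map ofReal *ᵥ fun j => conj (grad w₁ x j)) := by
    rw [grad_mulVec_of_comp_eq_mul hw₁ hQ hw₁Q, ← conj_map_ofReal_mulVec]
    funext j
    simp
  rw [Gint_eq_dotProduct, Gint_eq_dotProduct, hw₁Q, hw₂Q, hA, hgrad₁,
    grad_mulVec_of_comp_eq_mul hw₂ hQ hw₂Q, ofReal_mulVec, mulVec_smul, mulVec_smul,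
    dotProduct_smul, dotProduct_smul, dotProduct_mulVec_conjugate hQc,
    dotProduct_mulVec_conjugate hQc, map_mul, smul_eq_mul, smul_eq_mul]
  ring

lemma Rm_transpose_mul_self : Rmᵀ * Rm = 1 := by
  have h3 : Real.sqrt 3 * Real.sqrt 3 = 3 := Real.mul_self_sqrt (by norm_num)
  ext i j
  fin_cases i <;> fin_cases j <;> simp [Rm, mul_apply, Fin.sum_univ_two] <;> linarith

lemma Rm_mem_orthogonalGroup : Rm ∈ orthogonalGroup (Fin 2) ℝ :=
  (mem_orthogonalGroup_iff' (Fin 2) ℝ).mpr Rm_transpose_mul_self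

lemma Rm_inv : Rm⁻¹ = Rmᵀ := inv_eq_left_inv Rm_transpose_mul_self

lemma Rc_inv : Rc⁻¹ = Rmᵀ.map ofReal := by
  refine inv_eq_left_inv ?_
  rw [transpose_map]
  exact (mem_orthogonalGroup_iff' (Fin 2) ℂ).mp
    (map_ofReal_mem_orthogonalGroup Rm_mem_orthogonalGroup)

lemma conj_τ_mul_conj_τ : conj τ * conj τ = τ := by
  rw [τ, ← exp_conj, ← exp_add, exp_eq_exp_iff_exists_int]
  refine ⟨-1, ?_⟩
  simp only [map_div₀, map_mul, conj_ofReal, conj_I, map_ofNat]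
  push_cast
  ring

theorem statement9_general (A : (Fin 2 → ℝ) → Matrix (Fin 2) (Fin 2) ℂ)
    (hAsym : ∀ x, A (Rm⁻¹.mulVec x) = Rc⁻¹ * A x * Rc)
    (E : Set (Fin 2 → ℝ)) (hER : Rm.mulVec ⁻¹' E = E)
    (w₁ w₂ : (Fin 2 → ℝ) → ℂ) (hw₁ : Differentiable ℝ w₁) (hw₂ : Differentiable ℝ w₂)
    (hw₁R : ∀ x, w₁ (Rm⁻¹.mulVec x) = τ * w₁ x)
    (hw₂R : ∀ x, w₂ (Rm⁻¹.mulVec x) = (starRingEnd ℂ) τ * w₂ x)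
    (β : Fin 2 → ℝ) :
    (∫ x in E, Gint A w₁ w₂ (Rm⁻¹.mulVec β) x) = τ * ∫ x in E, Gint A w₁ w₂ β x := by
  rw [Rm_inv] at hAsym hw₁R hw₂R ⊢
  have hQ : Rmᵀ ∈ orthogonalGroup (Fin 2) ℝ :=
    (mem_orthogonalGroup_iff (Fin 2) ℝ).mpr Rm_transpose_mul_self
  have hA : ∀ x, A (Rmᵀ *ᵥ x) = Rmᵀ.map ofReal * A x * (Rmᵀ.map ofReal)ᵀ := fun x => by
    rw [hAsym, Rc_inv, ← transpose_map, transpose_transpose]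
    rfl
  have hE : (Rmᵀ *ᵥ ·) ⁻¹' E = E :=
    preimage_mulVec_eq_of_mul_eq_one
      ((mem_orthogonalGroup_iff (Fin 2) ℝ).mp Rm_mem_orthogonalGroup) hER
  calc ∫ x in E, Gint A w₁ w₂ (Rmᵀ *ᵥ β) x
      = ∫ x in E, Gint A w₁ w₂ (Rmᵀ *ᵥ β) (Rmᵀ *ᵥ x) :=
        (setIntegral_comp_mulVec_of_preimage_eq hQ hE _).symm
    _ = ∫ x in E, τ * Gint A w₁ w₂ β x := by
        simp_rw [Gint_mulVec hQ hA hw₁ hw₂ hw₁R hw₂R, conj_τ_mul_conj_τ]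
    _ = τ * ∫ x in E, Gint A w₁ w₂ β x := integral_const_mul τ _

/-- under rotational invariance of `A` and of `E`, and rotation
eigenvalues `τ`, `conj τ` for `w₁`, `w₂`, one has `G(R⁻¹β) = τ·G(β)`. -/
theorem statement9 (A : (Fin 2 → ℝ) → Matrix (Fin 2) (Fin 2) ℂ)
    (hAmeas : ∀ k l, Measurable fun x => A x k l)
    (hAsym : ∀ x, A (Rm⁻¹.mulVec x) = Rc⁻¹ * A x * Rc)
    (E : Set (Fin 2 → ℝ)) (hE : MeasurableSet E) (hER : Rm.mulVec ⁻¹' E = E)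
    (w₁ w₂ : (Fin 2 → ℝ) → ℂ) (hw₁ : Differentiable ℝ w₁) (hw₂ : Differentiable ℝ w₂)
    (hw₁R : ∀ x, w₁ (Rm⁻¹.mulVec x) = τ * w₁ x)
    (hw₂R : ∀ x, w₂ (Rm⁻¹.mulVec x) = (starRingEnd ℂ) τ * w₂ x)
    (β : Fin 2 → ℝ)
    (hint₁ : IntegrableOn (Gint A w₁ w₂ β) E)
    (hint₂ : IntegrableOn (Gint A w₁ w₂ (Rm⁻¹.mulVec β)) E) :
    (∫ x in E, Gint A w₁ w₂ (Rm⁻¹.mulVec β) x) = τ * ∫ x in E, Gint A w₁ w₂ β x :=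
  statement9_general A hAsym E hER w₁ w₂ hw₁ hw₂ hw₁R hw₂R β
end

section
/- Let a, b, s, r ∈ ℂ with s² = 1 - b², r² = 1 - a²b², s ≠ 0 and r ≠ 0. If (1/s - 1/r)² = (b/s - a·b/r)² + 4, then b²·(1 - a)² = 0. -/
/-- the algebraic core of Lemma 4.9: with `s² = 1 - b²`,
`r² = 1 - a²b²`, `s, r ≠ 0`, the identity `(1/s - 1/r)² = (b/s - ab/r)² + 4`
forces `b²(1 - a)² = 0`. -/
theorem statement13 (a b s r : ℂ)
    (hs2 : s ^ 2 = 1 - b ^ 2) (hr2 : r ^ 2 = 1 - a ^ 2 * b ^ 2)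
    (hs : s ≠ 0) (hr : r ≠ 0)
    (h : (1 / s - 1 / r) ^ 2 = (b / s - a * b / r) ^ 2 + 4) :
    b ^ 2 * (1 - a) ^ 2 = 0 := by
  have h1 : (r - s) ^ 2 = b ^ 2 * (r - a * s) ^ 2 + 4 * s ^ 2 * r ^ 2 := by
    field_simp at h
    linear_combination h
  have key : r * s * (r * s - (a * b ^ 2 - 1)) = 0 := by
    linear_combination (-(1:ℂ)/2) * h1 + (-r^2 + (1 - a^2*b^2)/2) * hs2 + ((b^2-1)/2) * hr2
  rcases mul_eq_zero.mp key with h0 | h0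
  · exact absurd h0 (mul_ne_zero hr hs)
  · have hrs : r * s = a * b ^ 2 - 1 := sub_eq_zero.mp h0
    linear_combination -(r*s + a*b^2 - 1) * hrs + r^2 * hs2 + (1 - b^2) * hr2
end

section
/- Let a, b, s, r ∈ ℂ with s² = 1 - b², r² = 1 - a²b², s ≠ 0 and r ≠ 0. If either (1/s - 1/r)² = (b/s + a·b/r)² or (b/s - a·b/r)² + 4 = (1/s + 1/r)², then b²·(1 + a)² = 0. -/
/-- the algebraic core of Lemma 4.10: with `s² = 1 - b²`,
`r² = 1 - a²b²`, `s, r ≠ 0`, each of the identities `(1/s - 1/r)² = (b/s + ab/r)²`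
and `(b/s - ab/r)² + 4 = (1/s + 1/r)²` forces `b²(1 + a)² = 0`. -/
theorem statement19 (a b s r : ℂ)
    (hs2 : s ^ 2 = 1 - b ^ 2) (hr2 : r ^ 2 = 1 - a ^ 2 * b ^ 2)
    (hs : s ≠ 0) (hr : r ≠ 0)
    (h : (1 / s - 1 / r) ^ 2 = (b / s + a * b / r) ^ 2
      ∨ (b / s - a * b / r) ^ 2 + 4 = (1 / s + 1 / r) ^ 2) :
    b ^ 2 * (1 + a) ^ 2 = 0 := by
  have hsr : s * r ≠ 0 := mul_ne_zero hs hr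
  have h2 : (s * r - (1 + a * b ^ 2)) * (s * r) = 0 := by
    rcases h with h | h
    · have h' : (r - s) ^ 2 = (b * r + a * b * s) ^ 2 := by
        have e1 : (1 / s - 1 / r) * (s * r) = r - s := by field_simp
        have e2 : (b / s + a * b / r) * (s * r) = b * r + a * b * s := by
          field_simp
        calc (r - s) ^ 2 = ((1 / s - 1 / r) * (s * r)) ^ 2 := by rw [e1]
          _ = ((b / s + a * b / r) * (s * r)) ^ 2 := by rw [mul_pow, mul_pow, h]; ring
          _ = (b * r + a * b * s) ^ 2 := by rw [e2]
      linear_combination (1/2) * r ^ 2 * hs2 + (1/2) * s ^ 2 * hr2 + (1/2) * h'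
    · have h' : (b * r - a * b * s) ^ 2 + 4 * (s * r) ^ 2 = (r + s) ^ 2 := by
        have e1 : (b / s - a * b / r) * (s * r) = b * r - a * b * s := by
          field_simp
        have e2 : (1 / s + 1 / r) * (s * r) = r + s := by field_simp
        calc (b * r - a * b * s) ^ 2 + 4 * (s * r) ^ 2
            = ((b / s - a * b / r) ^ 2 + 4) * (s * r) ^ 2 := by
              rw [← e1]; ring
          _ = ((1 / s + 1 / r) * (s * r)) ^ 2 := by rw [mul_pow, h]; ring
          _ = (r + s) ^ 2 := by rw [e2]
      linear_combination (-(1:ℂ)/2) * r ^ 2 * hs2 + (-(1:ℂ)/2) * s ^ 2 * hr2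
        + (1/2) * h'
  have key : s * r = 1 + a * b ^ 2 :=
    sub_eq_zero.mp ((mul_eq_zero.mp h2).resolve_right hsr)
  linear_combination (-(s * r + 1 + a * b ^ 2)) * key + r ^ 2 * hs2
    + (1 - b ^ 2) * hr2
end
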